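/- Consider the weighted Copeland construction on {p,a,b,c}: votes p ≻ a ≻ b ≻ c of weight wᵢ for wᵢ ∈ W (∑ W = 2K), and votes a ≻ p ≻ b ≻ c and c ≻ b ≻ a ≻ p each of weight K+1, tie-breaking a ≻ b ≻ c ≻ p, 0 ≤ α < 1. If all W-votes are replaced by orders ranking p first and p wins, then at least one of the three pairwise contests among a, b, c is an exact tie. -/

import Mathlib

/-- The four candidates. -/
inductive Cand : Type
  | p | a | b | c
deriving DecidableEq

instance : Fintype Cand :=
  Fintype.ofList [Cand.p, Cand.a, Cand.b, Cand.c] (by intro x; cases x <;> simp)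

open Cand

/-- Weighted pairwise margin `D(x,y)`. -/
def marg (E : Multiset (ℕ × List Cand)) (x y : Cand) : ℤ :=
  (E.map fun v => if v.2.idxOf x < v.2.idxOf y then (v.1 : ℤ) else -(v.1 : ℤ)).sum

/-- Copeland^α score of `x`: number of pairwise wins plus `α` times the number of
pairwise ties. -/
noncomputable def copelandScore (al : ℝ) (E : Multiset (ℕ × List Cand)) (x : Cand) : ℝ :=
  (((Finset.univ.erase x).filter fun y => 0 < marg E x y).card : ℝ) +
    al * (((Finset.univ.erase x).filter fun y => marg E x y = 0).card : ℝ)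

/-- `x` wins w.r.t. a score function and a tie-breaking priority order. -/
def Wins {S : Type} [LinearOrder S] (score : Cand → S) (prio : Cand → ℕ) (x : Cand) : Prop :=
  ∀ y, y ≠ x → score y < score x ∨ (score y = score x ∧ prio x < prio y)

/-- Tie-breaking order `a ≻ b ≻ c ≻ p`. -/
def prioABCP : Cand → ℕ
  | Cand.a => 0
  | Cand.b => 1
  | Cand.c => 2
  | Cand.p => 3

/-!
`p` beats `b` and `c` by `2K` and loses to `a` by `2`, so its Copeland score is exactly `2`;
being last in the tie-breaking order, `p` wins only if every other candidate scores below `2`.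
But if no contest among `a`, `b`, `c` is tied, one of them beats two others: `a` if it beats
`b` or `c` (it already beats `p`), and otherwise the winner of `b` versus `c`.
-/

lemma marg_add (E F : Multiset (ℕ × List Cand)) (x y : Cand) :
    marg (E + F) x y = marg E x y + marg F x y := by
  simp [marg]

lemma marg_swap {E : Multiset (ℕ × List Cand)} {x y : Cand} (hxy : x ≠ y)
    (h : ∀ v ∈ E, x ∈ v.2 ∧ y ∈ v.2) : marg E y x = -marg E x y := by
  unfold marg
  rw [← Multiset.sum_map_neg', Multiset.map_map]
  refine congrArg _ (Multiset.map_congr rfl fun v hv => ?_)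
  obtain ⟨hx, hy⟩ := h v hv
  have hne : v.2.idxOf x ≠ v.2.idxOf y := fun hE => hxy ((List.idxOf_inj hx).mp hE)
  rcases lt_or_gt_of_ne hne with h1 | h1 <;> simp [h1, not_lt.mpr h1.le]

lemma marg_of_forall_head {E : Multiset (ℕ × List Cand)} {x y : Cand}
    (hE : ∀ v ∈ E, v.2.head? = some x) (hyx : y ≠ x) :
    marg E x y = ((E.map Prod.fst).sum : ℤ) := by
  unfold marg
  rw [Nat.cast_multiset_sum, Multiset.map_map]
  refine congrArg _ (Multiset.map_congr rfl fun v hv => ?_)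
  obtain ⟨t, ht⟩ : ∃ t, v.2 = x :: t := by
    rcases hl : v.2 with _ | ⟨h, t⟩
    · simpa [hl] using hE v hv
    · exact ⟨t, by simpa [hl] using hE v hv⟩
  rw [ht, if_pos (by simp [List.idxOf_cons_ne _ hyx.symm])]
  rfl

lemma two_le_copelandScore {al : ℝ} (hal : 0 ≤ al) {E : Multiset (ℕ × List Cand)}
    {x y z : Cand} (hyz : y ≠ z) (hy : y ≠ x) (hz : z ≠ x)
    (hxy : 0 < marg E x y) (hxz : 0 < marg E x z) : 2 ≤ copelandScore al E x := by
  have hsub : ({y, z} : Finset Cand) ⊆ (Finset.univ.erase x).filter (0 < marg E x ·) := by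
    intro t ht
    rcases Finset.mem_insert.mp ht with rfl | ht
    · simp [hy, hxy]
    · rw [Finset.mem_singleton.mp ht]; simp [hz, hxz]
  have hcard := Finset.card_le_card hsub
  rw [Finset.card_pair hyz] at hcard
  unfold copelandScore
  have := mul_nonneg hal
    (Nat.cast_nonneg (α := ℝ) ((Finset.univ.erase x).filter (marg E x · = 0)).card)
  have : (2 : ℝ) ≤ ((Finset.univ.erase x).filter (0 < marg E x ·)).card := by exact_mod_cast hcard
  linarith

lemma Wins.lt_of_prio_le {S : Type} [LinearOrder S] {score : Cand → S} {prio : Cand → ℕ}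
    {x : Cand} (hwin : Wins score prio x) (hprio : ∀ y, prio y ≤ prio x) {y : Cand}
    (hyx : y ≠ x) : score y < score x :=
  (hwin y hyx).resolve_right fun h => (hprio y).not_gt h.2

lemma exists_ne_p_beats_two (M : Cand → Cand → ℤ) (hanti : ∀ x y, x ≠ y → M y x = -M x y)
    (hap : 0 < M a p) (hab : M a b ≠ 0) (hbc : M b c ≠ 0) (hac : M a c ≠ 0) :
    ∃ x y z, x ≠ p ∧ y ≠ z ∧ y ≠ x ∧ z ≠ x ∧ 0 < M x y ∧ 0 < M x z := by
  rcases hab.lt_or_gt with hab | hab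
  · rcases hac.lt_or_gt with hac | hac
    · have hba : 0 < M b a := by rw [hanti a b (by decide)]; omega
      have hca : 0 < M c a := by rw [hanti a c (by decide)]; omega
      rcases hbc.lt_or_gt with hbc | hbc
      · have hcb : 0 < M c b := by rw [hanti b c (by decide)]; omega
        exact ⟨c, a, b, by decide, by decide, by decide, by decide, hca, hcb⟩
      · exact ⟨b, a, c, by decide, by decide, by decide, by decide, hba, hbc⟩
    · exact ⟨a, p, c, by decide, by decide, by decide, by decide, hap, hac⟩
  · exact ⟨a, p, b, by decide, by decide, by decide, by decide, hap, hab⟩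

section Construction

variable {K : ℕ} {V : Multiset (ℕ × List Cand)}

abbrev copelandElection (K : ℕ) (V : Multiset (ℕ × List Cand)) : Multiset (ℕ × List Cand) :=
  V + {(K + 1, [a, p, b, c]), (K + 1, [c, b, a, p])}

lemma copelandElection_marg_swap (hV : ∀ v ∈ V, v.2.Perm [p, a, b, c]) {x y : Cand}
    (hxy : x ≠ y) : marg (copelandElection K V) y x = -marg (copelandElection K V) x y := by
  have hmem : ∀ v ∈ copelandElection K V, ∀ x : Cand, x ∈ v.2 := by
    intro v hv x
    rcases Multiset.mem_add.mp hv with hv | hv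
    · exact (hV v hv).mem_iff.mpr (by cases x <;> simp)
    · simp only [Multiset.insert_eq_cons, Multiset.mem_cons, Multiset.mem_singleton] at hv
      rcases hv with rfl | rfl <;> cases x <;> simp
  exact marg_swap hxy fun v hv => ⟨hmem v hv x, hmem v hv y⟩

variable (hV : ∀ v ∈ V, v.2.head? = some p)
include hV

lemma copelandElection_marg_p {x : Cand} (hx : x ≠ p) :
    marg (copelandElection K V) p x =
      (V.map Prod.fst).sum + marg {(K + 1, [a, p, b, c]), (K + 1, [c, b, a, p])} p x := by
  rw [marg_add, marg_of_forall_head hV hx]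

variable (hK : (V.map Prod.fst).sum = 2 * K)
include hK

lemma copelandElection_marg_p_a : marg (copelandElection K V) p a = -2 := by
  rw [copelandElection_marg_p hV (by decide), hK]; simp [marg]; ring

lemma copelandElection_marg_p_b : marg (copelandElection K V) p b = 2 * K := by
  rw [copelandElection_marg_p hV (by decide), hK]; simp [marg]

lemma copelandElection_marg_p_c : marg (copelandElection K V) p c = 2 * K := by
  rw [copelandElection_marg_p hV (by decide), hK]; simp [marg]

lemma copelandScore_copelandElection_p (al : ℝ) (hKpos : 0 < K) :
    copelandScore al (copelandElection K V) p = 2 := by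
  have hpa := copelandElection_marg_p_a hV hK
  have hpb := copelandElection_marg_p_b hV hK
  have hpc := copelandElection_marg_p_c hV hK
  have hwins : (Finset.univ.erase p).filter (0 < marg (copelandElection K V) p ·) = {b, c} := by
    ext y; cases y <;> simp [hpa, hpb, hpc, hKpos]
  have hties : (Finset.univ.erase p).filter (marg (copelandElection K V) p · = 0) = ∅ := by
    ext y; cases y <;> simp [hpa, hpb, hpc, hKpos.ne']
  rw [copelandScore, hwins, hties, Finset.card_pair (by decide)]
  norm_num

end Construction

theorem stmt_11_general (K : ℕ) (hK : 0 < K) (W : Multiset ℕ)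
    (hsum : W.sum = 2 * K)
    (al : ℝ) (hal0 : 0 ≤ al)
    (V : Multiset (ℕ × List Cand)) (hV : V.map Prod.fst = W)
    (hrank : ∀ v ∈ V, v.2.Perm [p, a, b, c] ∧ v.2.head? = some p) :
    let E : Multiset (ℕ × List Cand) := V + {(K + 1, [a, p, b, c]), (K + 1, [c, b, a, p])}
    Wins (copelandScore al E) prioABCP p →
      (marg E a b = 0 ∨ marg E b c = 0 ∨ marg E a c = 0) := by
  intro E hwin
  by_contra! ⟨hab, hbc, hac⟩
  have hV' : ∀ v ∈ V, v.2.head? = some p := fun v hv => (hrank v hv).2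
  have hK' : (V.map Prod.fst).sum = 2 * K := by rw [hV, hsum]
  have hanti (x y : Cand) (hxy : x ≠ y) : marg E y x = -marg E x y :=
    copelandElection_marg_swap (fun v hv => (hrank v hv).1) hxy
  have hap : 0 < marg E a p := by
    rw [hanti p a (by decide), copelandElection_marg_p_a hV' hK']; norm_num
  obtain ⟨x, y, z, hxp, hyz, hyx, hzx, hxy, hxz⟩ :=
    exists_ne_p_beats_two (marg E) hanti hap hab hbc hac
  have hlt := hwin.lt_of_prio_le (fun y => by cases y <;> decide) hxp
  rw [copelandScore_copelandElection_p hV' hK' al hK] at hlt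
  exact (two_le_copelandScore hal0 hyz hyx hzx hxy hxz).not_gt hlt

/-- Copeland construction: `W`-votes (`∑ W = 2K`) replaced by arbitrary orders ranking
`p` first, plus fixed votes `a ≻ p ≻ b ≻ c` and `c ≻ b ≻ a ≻ p` each of weight `K + 1`;
tie-breaking `a ≻ b ≻ c ≻ p`, `0 ≤ α < 1`. If `p` wins the Copeland^α election, then at
least one of the three pairwise contests among `a`, `b`, `c` is an exact tie. -/
theorem stmt_11 (K : ℕ) (hK : 0 < K) (W : Multiset ℕ)
    (hpos : ∀ w ∈ W, 0 < w) (hsum : W.sum = 2 * K)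
    (al : ℝ) (hal0 : 0 ≤ al) (hal1 : al < 1)
    (V : Multiset (ℕ × List Cand)) (hV : V.map Prod.fst = W)
    (hrank : ∀ v ∈ V, v.2.Perm [p, a, b, c] ∧ v.2.head? = some p) :
    let E : Multiset (ℕ × List Cand) := V + {(K + 1, [a, p, b, c]), (K + 1, [c, b, a, p])}
    Wins (copelandScore al E) prioABCP p →
      (marg E a b = 0 ∨ marg E b c = 0 ∨ marg E a c = 0) :=
  stmt_11_general K hK W hsum al hal0 V hV hrank
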